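/- Let V' := ⊕_{j∈ℤ₊} (ℂtʲ)* be the restricted (graded) dual of ℂ[t], made into a D⁻-module by the contragredient action (a·ξ)(p) = −ξ(a·p) for a ∈ D⁻, ξ ∈ V', p ∈ ℂ[t]. Then V' is an irreducible highest weight D⁻-module with highest weight vector 1* (the functional dual to 1), and V' has growth 1. -/

import Mathlib

open Filter Module

noncomputable section

/-! ## The Lie algebra `D⁻` of regular differential operators on `ℂ`

The space `ℂ[t,t⁻¹]` of Laurent polynomials is realized as the space `LP = ℤ →₀ ℂ`
of finitely supported functions, `Finsupp.single n 1` playing the role of `tⁿ`. -/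

abbrev LP : Type := ℤ →₀ ℂ

/-- Multiplication by `t` : `tⁿ ↦ tⁿ⁺¹`. -/
def tM : Module.End ℂ LP := Finsupp.lsum ℂ fun n => Finsupp.lsingle (n + 1)

/-- The derivative `d/dt` : `tⁿ ↦ n tⁿ⁻¹`. -/
def ddt : Module.End ℂ LP := Finsupp.lsum ℂ fun n => (n : ℂ) • Finsupp.lsingle (n - 1)

/-- `D = t d/dt`. -/
def Dop : Module.End ℂ LP := tM * ddt

/-- `D⁻`, the Lie algebra of regular differential operators on `ℂ`: the span, inside
`End ℂ (ℂ[t,t⁻¹])`, of the operators `f(t) (d/dt)^m` with `f ∈ ℂ[t]`, `m ∈ ℤ₊`. -/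
def Dminus : Submodule ℂ (Module.End ℂ LP) :=
  Submodule.span ℂ {A | ∃ (k m : ℕ), A = tM ^ k * ddt ^ m}

/-- The subspace `ℂ[t] ⊆ ℂ[t,t⁻¹]`. -/
def polyPart : Submodule ℂ LP := Finsupp.supported ℂ ℂ (Set.Ici (0 : ℤ))

/-- Operators homogeneous of degree `j` for the principal gradation (`deg t = -1`,
`deg d/dt = 1`): those `A` with `A(tⁿ) ∈ ℂ · tⁿ⁻ʲ` for all `n ∈ ℤ`. -/
def homogDeg (j : ℤ) : Submodule ℂ (Module.End ℂ LP) where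
  carrier := {A | ∀ n : ℤ, A (Finsupp.single n 1) ∈ (ℂ ∙ (Finsupp.single (n - j) 1 : LP))}
  add_mem' := by
    intro A B hA hB n
    rw [LinearMap.add_apply]
    exact Submodule.add_mem _ (hA n) (hB n)
  zero_mem' := by
    intro n
    rw [LinearMap.zero_apply]
    exact Submodule.zero_mem _
  smul_mem' := by
    intro c A hA n
    rw [LinearMap.smul_apply]
    exact Submodule.smul_mem _ _ (hA n)

/-- The degree `j` piece `D⁻_j` of the principal `ℤ`-gradation of `D⁻`. -/
def DminusG (j : ℤ) : Submodule ℂ (Module.End ℂ LP) := Dminus ⊓ homogDeg j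

/-! ## Representations -/

/-- A representation on `M` of a set `S` of operators (a Lie subalgebra of `End ℂ V`),
encoded as a function `ρ` defined on all of `End ℂ V` which is linear and bracket-preserving
on members of `S` (its values outside `S` are irrelevant). -/
def IsRepOn {V M : Type*} [AddCommGroup V] [Module ℂ V] [AddCommGroup M] [Module ℂ M]
    (S : Set (Module.End ℂ V)) (ρ : Module.End ℂ V → Module.End ℂ M) : Prop :=
  (∀ A ∈ S, ∀ B ∈ S, ρ (A + B) = ρ A + ρ B) ∧
  (∀ (c : ℂ), ∀ A ∈ S, ρ (c • A) = c • ρ A) ∧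
  (∀ A ∈ S, ∀ B ∈ S, ρ ⁅A, B⁆ = ⁅ρ A, ρ B⁆)

/-- `W` is a submodule for the action `ρ` of `S`. -/
def ActInvariant {V M : Type*} [AddCommGroup V] [Module ℂ V] [AddCommGroup M] [Module ℂ M]
    (S : Set (Module.End ℂ V)) (ρ : Module.End ℂ V → Module.End ℂ M)
    (W : Submodule ℂ M) : Prop :=
  ∀ A ∈ S, W.map (ρ A) ≤ W

/-- The module `M` is irreducible under the action `ρ` of `S`. -/
def IsIrreducibleOn {V M : Type*} [AddCommGroup V] [Module ℂ V] [AddCommGroup M] [Module ℂ M]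
    (S : Set (Module.End ℂ V)) (ρ : Module.End ℂ V → Module.End ℂ M) : Prop :=
  Nontrivial M ∧ ∀ W : Submodule ℂ M, ActInvariant S ρ W → W = ⊥ ∨ W = ⊤

/-! ## Growth -/

/-- The growth of a `ℤ₊`-graded vector space (graded pieces `L j`, `j ≥ 0`), computed from the
filtration by the subspaces `⨁_{i ≤ j} L i`:  `limsup_{j → ∞} log dim (⨁_{i ≤ j} L i) / log j`,
as an extended real number. -/
def gradedGrowth {M : Type*} [AddCommGroup M] [Module ℂ M] (L : ℤ → Submodule ℂ M) : EReal :=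
  limsup (fun j : ℕ =>
    ((Real.log (Module.finrank ℂ ↥(⨆ i ∈ Finset.range (j + 1), L (i : ℤ))) /
      Real.log j : ℝ) : EReal)) atTop

/-- The restricted (graded) dual `V' = ⊕_{j ∈ ℤ₊} (ℂ tʲ)*` of `ℂ[t]`, realized inside the full
dual of `ℂ[t,t⁻¹]` as the functionals vanishing on all `tⁿ`, `n < 0`, and on all but finitely
many `tʲ`, `j ≥ 0`. -/
def Vdual : Submodule ℂ (Module.Dual ℂ LP) where
  carrier := {ξ | (∀ n : ℤ, n < 0 → ξ (Finsupp.single n 1) = 0) ∧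
                  (∃ N : ℕ, ∀ n : ℤ, (N : ℤ) ≤ n → ξ (Finsupp.single n 1) = 0)}
  add_mem' := by
    rintro ξ η ⟨h1, N1, hN1⟩ ⟨h2, N2, hN2⟩
    constructor
    · intro n hn
      rw [LinearMap.add_apply, h1 n hn, h2 n hn, add_zero]
    · refine ⟨max N1 N2, fun n hn => ?_⟩
      rw [LinearMap.add_apply,
        hN1 n (le_trans (by exact_mod_cast le_max_left N1 N2) hn),
        hN2 n (le_trans (by exact_mod_cast le_max_right N1 N2) hn), add_zero]
  zero_mem' := ⟨fun n _ => rfl, 0, fun n _ => rfl⟩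
  smul_mem' := by
    rintro c ξ ⟨h1, N, hN⟩
    constructor
    · intro n hn
      rw [LinearMap.smul_apply, h1 n hn, smul_zero]
    · exact ⟨N, fun n hn => by rw [LinearMap.smul_apply, hN n hn, smul_zero]⟩

/-- The projection of `ℂ[t,t⁻¹]` onto `ℂ[t]` along the span of the `tⁿ`, `n < 0`. -/
def projPoly : Module.End ℂ LP :=
  Finsupp.lsum ℂ fun n => if 0 ≤ n then Finsupp.lsingle n else 0

/-- The contragredient action `(a·ξ)(p) = -ξ(a p)` (`p ∈ ℂ[t]`) of an operator `a`
preserving `ℂ[t]`, on functionals supported on `ℂ[t]`. -/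
def dualAct (A : Module.End ℂ LP) : Module.End ℂ (Module.Dual ℂ LP) :=
  - (Module.Dual.transpose (R := ℂ) (projPoly ∘ₗ A ∘ₗ projPoly))

/-- The functional `(tʲ)*`. -/
def tStar (j : ℤ) : Module.Dual ℂ LP := Finsupp.lapply j

/-- The pieces of the induced principal gradation of `V'` : `V'_j = ℂ·(tʲ)*`, `j ≥ 0`. -/
def gradeD (j : ℤ) : Submodule ℂ (Module.Dual ℂ LP) :=
  if 0 ≤ j then ℂ ∙ tStar j else ⊥

/-! `D⁻` is spanned by the operators `tᵏ (d/dt)ᵐ`, which are homogeneous of degree `m - k`, and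
the contragredient action of an operator homogeneous of degree `j` sends `(tᵏ)*` to a multiple of
`(tᵏ⁺ʲ)*` (to `0` when `k + j < 0`). This gives the invariance of `V'`, the compatibility with the
gradation, and the highest weight property of `1*`. For irreducibility, `t` lowers degrees: if
`M` is the top degree of a nonzero `ξ ∈ V'`, then `t^M · ξ` is a nonzero multiple of `1*`; and
`d/dt · (tᵏ)* = -(k + 1) (tᵏ⁺¹)*` climbs back to every `(tᵏ)*`. The growth is `1` because
`⨁_{i ≤ j} V'_i` has dimension `j + 1`. -/

open Finsupp

lemma tM_single (n : ℤ) : tM (single n 1) = single (n + 1) 1 := by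
  simp [tM]

lemma ddt_single (n : ℤ) : ddt (single n 1) = (n : ℂ) • single (n - 1) 1 := by
  simp [ddt]

lemma projPoly_single (n : ℤ) (c : ℂ) :
    projPoly (single n c) = if 0 ≤ n then single n c else 0 := by
  unfold projPoly; split_ifs <;> simp [*]

lemma projPoly_apply (v : LP) (k : ℤ) : projPoly v k = if 0 ≤ k then v k else 0 := by
  induction v using Finsupp.induction_linear with
  | zero => simp
  | add v w hv hw => simp only [map_add, Finsupp.add_apply, hv, hw]; split_ifs <;> simp
  | single n c =>
    rw [projPoly_single]
    obtain rfl | h := eq_or_ne n k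
    · split_ifs <;> simp
    · split_ifs <;> simp [h]

@[simp]
lemma tStar_apply (j : ℤ) (v : LP) : tStar j v = v j := rfl

lemma dual_ext {ξ η : Module.Dual ℂ LP} (h : ∀ n : ℤ, ξ (single n 1) = η (single n 1)) :
    ξ = η :=
  Finsupp.lhom_ext' fun n => LinearMap.ext_ring (h n)

lemma dualAct_apply_single (A : Module.End ℂ LP) (ξ : Module.Dual ℂ LP) (n : ℤ) :
    dualAct A ξ (single n 1) = if 0 ≤ n then -ξ (projPoly (A (single n 1))) else 0 := by
  rw [dualAct, LinearMap.neg_apply, LinearMap.neg_apply, Module.Dual.transpose_apply]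
  split_ifs with hn <;> simp [projPoly_single, hn]

lemma dualAct_tStar_apply_single (A : Module.End ℂ LP) (k n : ℤ) :
    dualAct A (tStar k) (single n 1) = if 0 ≤ n ∧ 0 ≤ k then -A (single n 1) k else 0 := by
  rw [dualAct_apply_single, tStar_apply, projPoly_apply]
  split_ifs <;> simp_all

section homogDeg

variable {A B : Module.End ℂ LP} {i j : ℤ}

lemma one_mem_homogDeg : (1 : Module.End ℂ LP) ∈ homogDeg 0 :=
  fun n => by simp [Submodule.mem_span_singleton_self]

lemma mul_mem_homogDeg (hA : A ∈ homogDeg i) (hB : B ∈ homogDeg j) : A * B ∈ homogDeg (i + j) := by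
  intro n
  obtain ⟨b, hb⟩ := Submodule.mem_span_singleton.1 (hB n)
  rw [Module.End.mul_apply, ← hb, map_smul, show n - (i + j) = n - j - i by ring]
  exact Submodule.smul_mem _ _ (hA (n - j))

lemma pow_mem_homogDeg (hA : A ∈ homogDeg j) (k : ℕ) : A ^ k ∈ homogDeg (k * j) := by
  induction k with
  | zero => simpa using one_mem_homogDeg
  | succ k ih => simpa [pow_succ, add_mul] using mul_mem_homogDeg ih hA

lemma tM_mem_homogDeg : tM ∈ homogDeg (-1) :=
  fun n => by simp [tM_single, Submodule.mem_span_singleton_self]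

lemma ddt_mem_homogDeg : ddt ∈ homogDeg 1 := fun n => by
  simpa [ddt_single] using
    Submodule.smul_mem _ (n : ℂ) (Submodule.mem_span_singleton_self (single (n - 1) (1 : ℂ)))

lemma Dop_mem_homogDeg : Dop ∈ homogDeg 0 := by
  rw [Dop]
  simpa using mul_mem_homogDeg tM_mem_homogDeg ddt_mem_homogDeg

lemma dualAct_tStar_of_mem_homogDeg (hA : A ∈ homogDeg j) (k : ℤ) :
    dualAct A (tStar k) =
      (if 0 ≤ k ∧ 0 ≤ k + j then -A (single (k + j) 1) k else 0) • tStar (k + j) := by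
  refine dual_ext fun n => ?_
  rw [dualAct_tStar_apply_single, LinearMap.smul_apply, tStar_apply]
  by_cases hn : n = k + j
  · subst hn
    simp [and_comm]
  · obtain ⟨b, hb⟩ := Submodule.mem_span_singleton.1 (hA n)
    rw [← hb]
    simp [hn, show n - j ≠ k by omega]

end homogDeg

def dualActₗ : Module.End ℂ LP →ₗ[ℂ] Module.End ℂ (Module.Dual ℂ LP) where
  toFun := dualAct
  map_add' A B := by ext; simp [dualAct, LinearMap.add_comp, LinearMap.comp_add]; ring
  map_smul' c A := by ext; simp [dualAct, Module.Dual.transpose_apply]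

lemma tStar_mem_Vdual {j : ℤ} (hj : 0 ≤ j) : tStar j ∈ Vdual :=
  ⟨fun n hn => by simp [show n ≠ j by omega],
    (j + 1).toNat, fun n hn => by simp [show n ≠ j by omega]⟩

lemma gradeD_of_nonneg {j : ℤ} (hj : 0 ≤ j) : gradeD j = ℂ ∙ tStar j := if_pos hj

lemma gradeD_of_neg {j : ℤ} (hj : j < 0) : gradeD j = ⊥ := if_neg (not_le.2 hj)

lemma eq_sum_tStar_of_mem_Vdual {ξ : Module.Dual ℂ LP} (hξ : ξ ∈ Vdual) {N : ℕ}
    (hN : ∀ n : ℤ, (N : ℤ) ≤ n → ξ (single n 1) = 0) :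
    ξ = ∑ i ∈ Finset.Ico (0 : ℤ) N, ξ (single i 1) • tStar i := by
  refine dual_ext fun n => ?_
  simp only [LinearMap.sum_apply, LinearMap.smul_apply, tStar_apply,
    single_apply, smul_eq_mul, mul_ite, mul_one, mul_zero, Finset.sum_ite_eq, Finset.mem_Ico]
  split_ifs with h
  · rfl
  · rcases lt_or_ge n 0 with hn | hn
    · exact hξ.1 n hn
    · exact hN n (by omega)

lemma iSup_gradeD : (⨆ j, gradeD j) = Vdual := by
  refine le_antisymm (iSup_le fun j => ?_) fun ξ hξ => ?_
  · rcases lt_or_ge j 0 with hj | hj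
    · simp [gradeD_of_neg hj]
    · rw [gradeD_of_nonneg hj, Submodule.span_singleton_le_iff_mem]
      exact tStar_mem_Vdual hj
  · obtain ⟨N, hN⟩ := hξ.2
    rw [eq_sum_tStar_of_mem_Vdual hξ hN]
    refine Submodule.sum_mem _ fun i hi => Submodule.smul_mem _ _ ?_
    have hi : 0 ≤ i := (Finset.mem_Ico.1 hi).1
    exact Submodule.mem_iSup_of_mem i <| by
      simp [gradeD_of_nonneg hi, Submodule.mem_span_singleton_self]

lemma gradeD_map_dualAct_le {A : Module.End ℂ LP} {j : ℤ} (hA : A ∈ homogDeg j) (k : ℤ) :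
    (gradeD k).map (dualAct A) ≤ gradeD (k + j) := by
  rcases lt_or_ge k 0 with hk | hk
  · simp [gradeD_of_neg hk]
  rw [gradeD_of_nonneg hk, Submodule.map_span, Set.image_singleton,
    Submodule.span_singleton_le_iff_mem, dualAct_tStar_of_mem_homogDeg hA]
  split_ifs with h
  · rw [gradeD_of_nonneg h.2]
    exact Submodule.smul_mem _ _ (Submodule.mem_span_singleton_self _)
  · simp

lemma Vdual_map_dualAct_le_of_mem_homogDeg {A : Module.End ℂ LP} {j : ℤ} (hA : A ∈ homogDeg j) :
    Vdual.map (dualAct A) ≤ Vdual := by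
  rw [← iSup_gradeD, Submodule.map_iSup]
  exact iSup_le fun k => (gradeD_map_dualAct_le hA k).trans (le_iSup gradeD (k + j))

lemma Vdual_map_dualAct_le {A : Module.End ℂ LP} (hA : A ∈ Dminus) :
    Vdual.map (dualAct A) ≤ Vdual := by
  suffices Dminus ≤ (Submodule.compatibleMaps Vdual Vdual).comap dualActₗ from
    Submodule.map_le_iff_le_comap.2 (this hA)
  refine Submodule.span_le.2 ?_
  rintro _ ⟨k, m, rfl⟩
  exact Submodule.map_le_iff_le_comap.1 <| Vdual_map_dualAct_le_of_mem_homogDeg <|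
    mul_mem_homogDeg (pow_mem_homogDeg tM_mem_homogDeg k) (pow_mem_homogDeg ddt_mem_homogDeg m)

lemma dualAct_tStar_zero_of_neg {A : Module.End ℂ LP} {j : ℤ} (hA : A ∈ homogDeg j) (hj : j < 0) :
    dualAct A (tStar 0) = 0 := by
  simp [dualAct_tStar_of_mem_homogDeg hA, hj]

lemma exists_dualAct_Dop_pow_tStar_zero :
    ∃ Δ : ℕ → ℂ, ∀ n : ℕ, dualAct (Dop ^ n) (tStar 0) = Δ n • tStar 0 :=
  ⟨fun n => -(Dop ^ n) (single 0 1) 0, fun n => by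
    simpa using dualAct_tStar_of_mem_homogDeg (pow_mem_homogDeg Dop_mem_homogDeg n) 0⟩

lemma tM_mem_Dminus : tM ∈ Dminus := Submodule.subset_span ⟨1, 0, by simp⟩

lemma ddt_mem_Dminus : ddt ∈ Dminus := Submodule.subset_span ⟨0, 1, by simp⟩

lemma dualAct_tM_apply_single (ξ : Module.Dual ℂ LP) (n : ℤ) :
    dualAct tM ξ (single n 1) = if 0 ≤ n then -ξ (single (n + 1) 1) else 0 := by
  rw [dualAct_apply_single, tM_single, projPoly_single]
  split_ifs <;> first | rfl | omega

lemma dualAct_tM_pow_apply_single {ξ : Module.Dual ℂ LP} (hξ : ξ ∈ Vdual) (m : ℕ) (n : ℤ) :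
    (dualAct tM ^ m) ξ (single n 1) = if 0 ≤ n then (-1) ^ m * ξ (single (n + m) 1) else 0 := by
  induction m generalizing n with
  | zero =>
    split_ifs with hn
    · simp
    · simpa using hξ.1 n (not_le.1 hn)
  | succ m ih =>
    rw [pow_succ', Module.End.mul_apply, dualAct_tM_apply_single, ih]
    split_ifs <;> first | omega | simp [pow_succ, add_assoc, add_comm (1 : ℤ)]

lemma exists_top_coeff {ξ : Module.Dual ℂ LP} (hξ : ξ ∈ Vdual) (h0 : ξ ≠ 0) :
    ∃ M : ℕ, ξ (single M 1) ≠ 0 ∧ ∀ n : ℤ, (M : ℤ) < n → ξ (single n 1) = 0 := by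
  classical
  have hex : ∃ N : ℕ, ∀ n : ℤ, (N : ℤ) ≤ n → ξ (single n 1) = 0 := hξ.2
  obtain ⟨M, hM⟩ : ∃ M, Nat.find hex = M + 1 := by
    refine Nat.exists_eq_succ_of_ne_zero fun h => h0 (dual_ext fun n => ?_)
    rcases lt_or_ge n 0 with hn | hn
    · exact hξ.1 n hn
    · exact Nat.find_spec hex n (by omega)
  refine ⟨M, fun hMz => Nat.find_min hex (show M < Nat.find hex by omega) fun n hn => ?_,
    fun n hn => Nat.find_spec hex n (by omega)⟩
  obtain rfl | hn := eq_or_lt_of_le hn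
  · exact hMz
  · exact Nat.find_spec hex n (by omega)

lemma dualAct_tM_pow_eq_smul_tStar_zero {ξ : Module.Dual ℂ LP} (hξ : ξ ∈ Vdual) {M : ℕ}
    (hM : ∀ n : ℤ, (M : ℤ) < n → ξ (single n 1) = 0) :
    (dualAct tM ^ M) ξ = ((-1) ^ M * ξ (single M 1)) • tStar 0 := by
  refine dual_ext fun n => ?_
  rw [dualAct_tM_pow_apply_single hξ, LinearMap.smul_apply, tStar_apply]
  rcases lt_trichotomy n 0 with hn | rfl | hn
  · simp [hn, hn.ne]
  · simp
  · simp [hn.le, hn.ne', hM (n + M) (by omega)]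

lemma dualAct_ddt_tStar {k : ℤ} (hk : 0 ≤ k) :
    dualAct ddt (tStar k) = (-(k + 1) : ℂ) • tStar (k + 1) := by
  simpa [ddt_single, hk, show 0 ≤ k + 1 by omega] using
    dualAct_tStar_of_mem_homogDeg ddt_mem_homogDeg k

section Irreducible

variable {W : Submodule ℂ (Module.Dual ℂ LP)}

lemma tStar_zero_mem_of_ne_bot (hWV : W ≤ Vdual) (hW : ∀ A ∈ Dminus, W.map (dualAct A) ≤ W)
    (hbot : W ≠ ⊥) : tStar 0 ∈ W := by
  obtain ⟨ξ, hξW, hξ0⟩ := Submodule.exists_mem_ne_zero_of_ne_bot hbot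
  obtain ⟨M, hMξ, hM⟩ := exists_top_coeff (hWV hξW) hξ0
  have hmem : (dualAct tM ^ M) ξ ∈ W := Module.End.pow_apply_mem_of_forall_mem M
    (fun η hη => hW tM tM_mem_Dminus (Submodule.mem_map_of_mem hη)) ξ hξW
  rw [dualAct_tM_pow_eq_smul_tStar_zero (hWV hξW) hM] at hmem
  exact (W.smul_mem_iff (mul_ne_zero (pow_ne_zero _ (neg_ne_zero.2 one_ne_zero)) hMξ)).1 hmem

lemma tStar_mem_of_tStar_zero_mem (hW : ∀ A ∈ Dminus, W.map (dualAct A) ≤ W)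
    (h0 : tStar 0 ∈ W) {k : ℤ} (hk : 0 ≤ k) : tStar k ∈ W := by
  induction k, hk using Int.leInduction with
  | base => exact h0
  | succ k hk ih =>
    have hmem := hW ddt ddt_mem_Dminus (Submodule.mem_map_of_mem ih)
    rw [dualAct_ddt_tStar hk] at hmem
    exact (W.smul_mem_iff (neg_ne_zero.2 (by norm_cast; omega))).1 hmem

lemma eq_bot_or_eq_Vdual (hWV : W ≤ Vdual) (hW : ∀ A ∈ Dminus, W.map (dualAct A) ≤ W) :
    W = ⊥ ∨ W = Vdual := by
  refine or_iff_not_imp_left.2 fun hbot => le_antisymm hWV ?_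
  rw [← iSup_gradeD]
  refine iSup_le fun k => ?_
  rcases lt_or_ge k 0 with hk | hk
  · simp [gradeD_of_neg hk]
  · rw [gradeD_of_nonneg hk, Submodule.span_singleton_le_iff_mem]
    exact tStar_mem_of_tStar_zero_mem hW (tStar_zero_mem_of_ne_bot hWV hW hbot) hk

end Irreducible

lemma linearIndependent_tStar : LinearIndependent ℂ tStar := by
  have h : (Finsupp.basisSingleOne : Module.Basis ℤ ℂ LP).coord = tStar := by
    ext
    simp
  exact h ▸ Module.Basis.linearIndependent_coord _

lemma iSupIndep_gradeD : iSupIndep gradeD := by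
  refine linearIndependent_tStar.iSupIndep_span_singleton.mono fun j => ?_
  rcases lt_or_ge j 0 with hj | hj
  · simp [gradeD_of_neg hj]
  · rw [gradeD_of_nonneg hj]

lemma finrank_biSup_span_singleton {K M ι : Type*} [Field K] [AddCommGroup M] [Module K M]
    {v : ι → M} (hv : LinearIndependent K v) (s : Finset ι) :
    Module.finrank K ↥(⨆ i ∈ s, K ∙ v i) = s.card := by
  have hspan : (⨆ i ∈ s, K ∙ v i) = Submodule.span K (Set.range (v ∘ ((↑) : s → ι))) := by
    rw [Submodule.span_range_eq_iSup, iSup_subtype']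
    rfl
  rw [hspan, finrank_span_eq_card (hv.comp _ Subtype.val_injective), Fintype.card_coe]

lemma finrank_biSup_gradeD (j : ℕ) :
    Module.finrank ℂ ↥(⨆ i ∈ Finset.range (j + 1), gradeD (i : ℤ)) = j + 1 := by
  have hgrade (i : ℕ) : gradeD i = ℂ ∙ tStar i := gradeD_of_nonneg (Int.natCast_nonneg i)
  have hsup : (⨆ i ∈ Finset.range (j + 1), gradeD (i : ℤ)) =
      ⨆ i ∈ Finset.range (j + 1), ℂ ∙ tStar i := by
    simp only [hgrade]
  rw [hsup, finrank_biSup_span_singleton (v := fun i : ℕ => tStar i)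
    (linearIndependent_tStar.comp _ Nat.cast_injective), Finset.card_range]

lemma Real.tendsto_log_add_one_div_log :
    Tendsto (fun x : ℝ => Real.log (x + 1) / Real.log x) atTop (nhds 1) := by
  have h := (Real.tendsto_log_comp_add_sub_log 1).div_atTop Real.tendsto_log_atTop
  have h1 : Tendsto (fun x => 1 + (Real.log (x + 1) - Real.log x) / Real.log x) atTop
      (nhds (1 + 0)) := tendsto_const_nhds.add h
  rw [add_zero] at h1
  refine h1.congr' ?_
  filter_upwards [eventually_gt_atTop 1] with x hx
  have := (Real.log_pos hx).ne'
  field_simp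
  ring

lemma gradedGrowth_gradeD : gradedGrowth gradeD = 1 := by
  have h : Tendsto (fun j : ℕ => Real.log ((j : ℝ) + 1) / Real.log j) atTop (nhds 1) :=
    Real.tendsto_log_add_one_div_log.comp tendsto_natCast_atTop_atTop
  rw [gradedGrowth]
  simp only [finrank_biSup_gradeD, Nat.cast_add, Nat.cast_one]
  exact ((continuous_coe_real_ereal.tendsto 1).comp h).limsup_eq

theorem stmt9 :
    -- `1*` is a nonzero element of `V'`
    tStar 0 ∈ Vdual ∧ tStar 0 ≠ 0 ∧
    -- `V'` is a `D⁻`-module for the contragredient action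
    (∀ A ∈ Dminus, Vdual.map (dualAct A) ≤ Vdual) ∧
    -- `V'` is irreducible
    (∀ W : Submodule ℂ (Module.Dual ℂ LP), W ≤ Vdual →
      (∀ A ∈ Dminus, W.map (dualAct A) ≤ W) → W = ⊥ ∨ W = Vdual) ∧
    -- `1*` is a highest weight vector: it is killed by `D⁻_j`, `j < 0`,
    (∀ j : ℤ, j < 0 → ∀ A ∈ DminusG j, dualAct A (tStar 0) = 0) ∧
    -- and each `Dⁿ` acts on it by a scalar
    (∃ Δ : ℕ → ℂ, ∀ n : ℕ, dualAct (Dop ^ n) (tStar 0) = Δ n • tStar 0) ∧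
    -- the induced principal gradation of `V'` has pieces `V'_j = ℂ·(tʲ)*` :
    gradeD 0 = (ℂ ∙ tStar 0) ∧
    iSupIndep gradeD ∧ (⨆ j, gradeD j) = Vdual ∧
    (∀ (j k : ℤ), ∀ A ∈ DminusG j, (gradeD k).map (dualAct A) ≤ gradeD (k + j)) ∧
    -- and `V'` has growth `1`
    gradedGrowth gradeD = 1 :=
  ⟨tStar_mem_Vdual le_rfl, linearIndependent_tStar.ne_zero 0,
    fun _ hA => Vdual_map_dualAct_le hA, fun _ => eq_bot_or_eq_Vdual,
    fun _ hj _ hA => dualAct_tStar_zero_of_neg hA.2 hj, exists_dualAct_Dop_pow_tStar_zero,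
    gradeD_of_nonneg le_rfl, iSupIndep_gradeD, iSup_gradeD,
    fun _ k _ hA => gradeD_map_dualAct_le hA.2 k, gradedGrowth_gradeD⟩
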